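/- For every positive integer k, the k-clique blowup C_5^k of the 5-cycle C_5 is a (cap, even hole)-free graph with ω(C_5^k) = 2k and χ(C_5^k) = ⌈5k/2⌉ = ⌈(5/4)·ω(C_5^k)⌉; hence the bound χ(G) ≤ ⌈(5/4)·ω(G)⌉ for (cap, even hole)-free graphs is attained for every even value of the clique number. -/

import Mathlib

open SimpleGraph

/-- A cap on a hole of length `n`: the cycle `C_n` together with one extra vertex (`none`)
adjacent exactly to the two adjacent vertices `0` and `1` of the cycle. -/
def capGraph (n : ℕ) : SimpleGraph (Option (Fin n)) :=
  SimpleGraph.fromRel (fun a b =>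
    match a, b with
    | some i, some j => (cycleGraph n).Adj i j
    | some i, none => i.val = 0 ∨ i.val = 1
    | none, _ => False)

/-- `G` contains an induced copy of `H`. -/
def HasInducedCopy {α β : Type} (H : SimpleGraph α) (G : SimpleGraph β) : Prop :=
  Nonempty (H ↪g G)

/-- `G` is cap-free: it contains no induced cap built on a hole of length `n ≥ 4`. -/
def CapFree {β : Type} (G : SimpleGraph β) : Prop :=
  ∀ n : ℕ, 4 ≤ n → ¬ HasInducedCopy (capGraph n) G

/-- `G` is even-hole-free: it contains no induced cycle of even length `n ≥ 4`. -/
def EvenHoleFree {β : Type} (G : SimpleGraph β) : Prop :=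
  ∀ n : ℕ, 4 ≤ n → Even n → ¬ HasInducedCopy (cycleGraph n) G

/-- The `t`-clique blowup `H^t` of a graph `H`: each vertex `v` of `H` is replaced by a
clique of size `t`, cliques of adjacent vertices are complete to each other and cliques
of distinct nonadjacent vertices are anticomplete. -/
def cliqueBlowupPow {α : Type} (H : SimpleGraph α) (t : ℕ) : SimpleGraph (α × Fin t) :=
  SimpleGraph.fromRel (fun x y => x.1 = y.1 ∨ H.Adj x.1 y.1)

/-!
Vertices in the same blob of a clique blowup are true twins, while neither a hole nor a cap has
true twins. So an induced hole or cap in `C₅ᵏ` meets every blob at most once and projects to an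
induced copy in `C₅` itself, which has no room for a cap or a `C₄`. A clique of `C₅ᵏ` lies in two
adjacent blobs and an independent set in two nonadjacent ones, so `ω = 2k` and `χ ≥ 5k/2`;
wrapping the blobs, laid out consecutively, around `⌈5k/2⌉` colours gives a matching colouring.
-/

open Finset
open scoped Fin.CommRing

variable {α V : Type}

namespace SimpleGraph

def IsTrueTwin (G : SimpleGraph V) (u v : V) : Prop :=
  G.Adj u v ∧ ∀ w, w ≠ u → w ≠ v → (G.Adj w u ↔ G.Adj w v)

theorem IsTrueTwin.symm {G : SimpleGraph V} {u v : V} (h : G.IsTrueTwin u v) :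
    G.IsTrueTwin v u :=
  ⟨h.1.symm, fun w hwv hwu => (h.2 w hwu hwv).symm⟩

theorem IsTrueTwin.of_embedding {G : SimpleGraph V} {G' : SimpleGraph α} (f : G ↪g G')
    {u v : V} (h : G'.IsTrueTwin (f u) (f v)) : G.IsTrueTwin u v :=
  ⟨f.map_rel_iff.mp h.1, fun w hwu hwv => by
    simpa only [f.map_rel_iff] using h.2 (f w) (f.injective.ne hwu) (f.injective.ne hwv)⟩

end SimpleGraph

theorem cliqueBlowupPow_adj {H : SimpleGraph α} {t : ℕ} {x y : α × Fin t} :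
    (cliqueBlowupPow H t).Adj x y ↔ x ≠ y ∧ (x.1 = y.1 ∨ H.Adj x.1 y.1) := by
  rw [cliqueBlowupPow, fromRel_adj, eq_comm (a := y.1), H.adj_comm y.1, or_self]

theorem cliqueBlowupPow_isTrueTwin {H : SimpleGraph α} {t : ℕ} {x y : α × Fin t} (hxy : x ≠ y)
    (h : x.1 = y.1) : (cliqueBlowupPow H t).IsTrueTwin x y :=
  ⟨cliqueBlowupPow_adj.mpr ⟨hxy, .inl h⟩, fun w hwx hwy => by
    simp only [cliqueBlowupPow_adj, h, ne_eq, hwx, hwy, not_false_eq_true, true_and]⟩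

theorem HasInducedCopy.of_cliqueBlowupPow {G : SimpleGraph V} {H : SimpleGraph α} {t : ℕ}
    (hG : ∀ u v, ¬ G.IsTrueTwin u v) (h : HasInducedCopy G (cliqueBlowupPow H t)) :
    HasInducedCopy G H := by
  obtain ⟨f⟩ := h
  have hinj : Function.Injective fun v => (f v).1 := fun u v huv => by_contra fun hne =>
    hG u v (.of_embedding f (cliqueBlowupPow_isTrueTwin (f.injective.ne hne) huv))
  refine ⟨⟨⟨fun v => (f v).1, hinj⟩, fun {u v} => ?_⟩⟩
  rw [← f.map_rel_iff, cliqueBlowupPow_adj]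
  constructor
  · exact fun h => ⟨fun e => h.ne (congrArg Prod.fst e), .inr h⟩
  · rintro ⟨hne, heq | hadj⟩
    · exact absurd (hinj heq) fun e => hne (congrArg f e)
    · exact hadj

theorem HasInducedCopy.card_le [Fintype V] [Fintype α] {G : SimpleGraph V} {H : SimpleGraph α}
    (h : HasInducedCopy G H) : Fintype.card V ≤ Fintype.card α :=
  let ⟨f⟩ := h
  Fintype.card_le_of_injective f f.injective

theorem cycleGraph_adj_iff_eq_add_one {n : ℕ} {u v : Fin (n + 2)} :
    (cycleGraph (n + 2)).Adj u v ↔ u = v + 1 ∨ v = u + 1 := by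
  rw [cycleGraph_adj, sub_eq_iff_eq_add', sub_eq_iff_eq_add', add_comm v, add_comm u]

theorem cycleGraph_not_isTrueTwin {n : ℕ} (hn : 4 ≤ n) (u v : Fin n) :
    ¬ (cycleGraph n).IsTrueTwin u v := by
  obtain ⟨m, rfl⟩ : ∃ m, n = m + 4 := ⟨n - 4, by omega⟩
  have h1 : (1 : Fin (m + 4)) ≠ 0 := by simp
  have h2 : (2 : Fin (m + 4)) ≠ 0 := by
    simp [Fin.ext_iff, Nat.mod_eq_of_lt (show 2 < m + 4 by omega)]
  have h3 : (3 : Fin (m + 4)) ≠ 0 := by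
    simp [Fin.ext_iff, Nat.mod_eq_of_lt (show 3 < m + 4 by omega)]
  -- the predecessor of `u` separates `u` from its successor
  suffices key : ∀ u : Fin (m + 4), ¬ (cycleGraph (m + 4)).IsTrueTwin u (u + 1) by
    intro h
    rcases cycleGraph_adj_iff_eq_add_one.mp h.1 with rfl | rfl
    exacts [key v h.symm, key u h]
  intro u ⟨_, h⟩
  have hne_u : u - 1 ≠ u := fun e => h1 (by linear_combination -e)
  have hne_v : u - 1 ≠ u + 1 := fun e => h2 (by linear_combination -e)
  have hadj : (cycleGraph (m + 4)).Adj (u - 1) u :=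
    cycleGraph_adj_iff_eq_add_one.mpr (.inr (by ring))
  refine cycleGraph_adj_iff_eq_add_one.not.mpr ?_ ((h _ hne_u hne_v).mp hadj)
  rintro (e | e)
  exacts [h3 (by linear_combination -e), h1 (by linear_combination e)]

theorem capGraph_adj_some_some {n : ℕ} {i j : Fin n} :
    (capGraph n).Adj (some i) (some j) ↔ (cycleGraph n).Adj i j := by
  rw [capGraph, fromRel_adj]
  exact ⟨fun ⟨_, h⟩ => h.elim id .symm, fun h => ⟨by simpa using h.ne, .inl h⟩⟩

theorem capGraph_adj_none_some {n : ℕ} {i : Fin n} :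
    (capGraph n).Adj none (some i) ↔ i.val = 0 ∨ i.val = 1 := by
  rw [capGraph, fromRel_adj]
  exact ⟨fun ⟨_, h⟩ => h.elim False.elim id, fun h => ⟨by simp, .inr h⟩⟩

def cycleGraphEmbeddingCapGraph (n : ℕ) : cycleGraph n ↪g capGraph n :=
  ⟨⟨some, Option.some_injective _⟩, capGraph_adj_some_some⟩

theorem capGraph_not_isTrueTwin {n : ℕ} (hn : 4 ≤ n) (u v : Option (Fin n)) :
    ¬ (capGraph n).IsTrueTwin u v := by
  suffices apex : ∀ i, ¬ (capGraph n).IsTrueTwin none (some i) by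
    rintro h
    rcases u with _ | i <;> rcases v with _ | j
    · exact h.1.ne rfl
    · exact apex j h
    · exact apex i h.symm
    · exact cycleGraph_not_isTrueTwin hn i j (.of_embedding (cycleGraphEmbeddingCapGraph n) h)
  obtain ⟨m, rfl⟩ : ∃ m, n = m + 4 := ⟨n - 4, by omega⟩
  -- the apex would be adjacent to `i` and to both cycle neighbours of `i`
  rintro i ⟨hi, h⟩
  have hnbr : ∀ j, (cycleGraph (m + 4)).Adj j i → j.val = 0 ∨ j.val = 1 := fun j hj =>
    capGraph_adj_none_some.mp <| (capGraph _).adj_symm <|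
      (h (some j) (by simp) (by simpa using hj.ne)).mpr (capGraph_adj_some_some.mpr hj)
  have hsucc := hnbr (i + 1) (cycleGraph_adj_iff_eq_add_one.mpr (.inl rfl))
  have hpred := hnbr (i - 1) (cycleGraph_adj_iff_eq_add_one.mpr (.inr (by ring)))
  have h1 : (1 : Fin (m + 4)) ≠ 0 := by simp
  have h2 : (2 : Fin (m + 4)) ≠ 0 := by
    simp [Fin.ext_iff, Nat.mod_eq_of_lt (show 2 < m + 4 by omega)]
  have hs : (i + 1).val ≠ i.val := Fin.val_injective.ne fun e => h1 (by linear_combination e)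
  have hp : (i - 1).val ≠ i.val := Fin.val_injective.ne fun e => h1 (by linear_combination -e)
  have hsp : (i + 1).val ≠ (i - 1).val :=
    Fin.val_injective.ne fun e => h2 (by linear_combination e)
  have hi' := capGraph_adj_none_some.mp hi
  omega

theorem CapFree.cliqueBlowupPow {H : SimpleGraph α} (hH : CapFree H) (t : ℕ) :
    CapFree (cliqueBlowupPow H t) := fun n hn h =>
  hH n hn (h.of_cliqueBlowupPow (capGraph_not_isTrueTwin hn))

theorem EvenHoleFree.cliqueBlowupPow {H : SimpleGraph α} (hH : EvenHoleFree H) (t : ℕ) :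
    EvenHoleFree (cliqueBlowupPow H t) := fun n hn he h =>
  hH n hn he (h.of_cliqueBlowupPow (cycleGraph_not_isTrueTwin hn))

set_option maxRecDepth 20000 in
theorem not_hasInducedCopy_cycleGraph_four_cycleGraph_five :
    ¬ HasInducedCopy (cycleGraph 4) (cycleGraph 5) := by
  rintro ⟨f⟩
  have : ∀ g : Fin 4 → Fin 5, Function.Injective g →
      ¬ ∀ i j, ((cycleGraph 5).Adj (g i) (g j) ↔ (cycleGraph 4).Adj i j) := by
    decide
  exact this f f.injective fun _ _ => f.map_rel_iff

theorem cycleGraph_five_capFree : CapFree (cycleGraph 5) := by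
  intro n hn h
  have hcard := h.card_le
  simp only [Fintype.card_option, Fintype.card_fin] at hcard
  obtain rfl : n = 4 := by omega
  obtain ⟨f⟩ := h
  exact not_hasInducedCopy_cycleGraph_four_cycleGraph_five
    ⟨(cycleGraphEmbeddingCapGraph 4).trans f⟩

theorem cycleGraph_five_evenHoleFree : EvenHoleFree (cycleGraph 5) := by
  intro n hn he h
  have hcard := h.card_le
  simp only [Fintype.card_fin] at hcard
  obtain rfl : n = 4 := by rcases he with ⟨r, rfl⟩; omega
  exact not_hasInducedCopy_cycleGraph_four_cycleGraph_five h

theorem cliqueNum_cliqueBlowupPow [Finite α] (H : SimpleGraph α) (t : ℕ) :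
    (cliqueBlowupPow H t).cliqueNum = t * H.cliqueNum := by
  classical
  have := Fintype.ofFinite α
  apply le_antisymm
  · obtain ⟨s, hs⟩ := (cliqueBlowupPow H t).exists_isNClique_cliqueNum
    have himage : H.IsClique (s.image Prod.fst : Set α) := by
      simp only [coe_image]
      rintro _ ⟨x, hx, rfl⟩ _ ⟨y, hy, rfl⟩ hxy
      exact (cliqueBlowupPow_adj.mp (hs.isClique hx hy (ne_of_apply_ne _ hxy))).2.resolve_left hxy
    calc (cliqueBlowupPow H t).cliqueNum = #s := hs.card_eq.symm
      _ ≤ #(s.image Prod.fst ×ˢ s.image Prod.snd) := card_le_card subset_product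
      _ ≤ #(s.image Prod.fst) * t := by
        rw [card_product]
        exact Nat.mul_le_mul_left _ ((card_le_univ _).trans (Fintype.card_fin t).le)
      _ ≤ t * H.cliqueNum := by rw [mul_comm]; exact Nat.mul_le_mul_left _ himage.card_le_cliqueNum
  · obtain ⟨s, hs⟩ := H.exists_isNClique_cliqueNum
    have hclique : (cliqueBlowupPow H t).IsClique (s ×ˢ univ : Finset (α × Fin t)) := by
      intro x hx y hy hxy
      simp only [coe_product, coe_univ, Set.mem_prod, Set.mem_univ, and_true, mem_coe] at hx hy
      exact cliqueBlowupPow_adj.mpr ⟨hxy, or_iff_not_imp_left.mpr (hs.isClique hx hy)⟩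
    calc t * H.cliqueNum = #(s ×ˢ (univ : Finset (Fin t))) := by simp [hs.card_eq, mul_comm]
      _ ≤ _ := hclique.card_le_cliqueNum

theorem indepNum_cliqueBlowupPow_le [Finite α] (H : SimpleGraph α) (t : ℕ) :
    (cliqueBlowupPow H t).indepNum ≤ H.indepNum := by
  classical
  obtain ⟨s, hs⟩ := (cliqueBlowupPow H t).exists_isNIndepSet_indepNum
  have hinj : Set.InjOn Prod.fst (s : Set (α × Fin t)) := fun x hx y hy hxy => by_contra fun hne =>
    hs.isIndepSet hx hy hne (cliqueBlowupPow_adj.mpr ⟨hne, .inl hxy⟩)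
  have himage : H.IsIndepSet (s.image Prod.fst : Set α) := by
    simp only [coe_image]
    rintro _ ⟨x, hx, rfl⟩ _ ⟨y, hy, rfl⟩ hxy hadj
    have hne : x ≠ y := ne_of_apply_ne _ hxy
    exact hs.isIndepSet hx hy hne (cliqueBlowupPow_adj.mpr ⟨hne, .inr hadj⟩)
  calc (cliqueBlowupPow H t).indepNum = #(s.image Prod.fst) := by
        rw [card_image_of_injOn hinj, hs.card_eq]
    _ ≤ H.indepNum := himage.card_le_indepNum

theorem SimpleGraph.Colorable.card_le_indepNum_mul [Fintype V] {G : SimpleGraph V} {n : ℕ}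
    (h : G.Colorable n) : Fintype.card V ≤ G.indepNum * n := by
  classical
  obtain ⟨C⟩ := h
  calc Fintype.card V = ∑ c : Fin n, #{v | C v = c} :=
        card_eq_sum_card_fiberwise fun v _ => mem_univ (C v)
    _ ≤ ∑ _c : Fin n, G.indepNum := sum_le_sum fun c _ =>
        IsIndepSet.card_le_indepNum <| by
          simpa [Coloring.colorClass] using C.isIndepSet_colorClass c
    _ = G.indepNum * n := by simp [mul_comm]

theorem cycleGraph_five_adj_iff {i j : Fin 5} :
    (cycleGraph 5).Adj i j ↔ (i.val + 1) % 5 = j.val ∨ (j.val + 1) % 5 = i.val := by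
  revert i j
  decide

theorem cliqueBlowupPow_cycleGraph_five_colorable (k : ℕ) :
    (cliqueBlowupPow (cycleGraph 5) k).Colorable ((5 * k + 1) / 2) := by
  set m := (5 * k + 1) / 2
  let pos : Fin 5 × Fin k → ℕ := fun x => x.2 + k * x.1
  have hpos : ∀ x, pos x < 5 * k := fun x => by simpa [mul_comm] using (finProdFinEquiv x).isLt
  -- Colour `pos x ∈ [0, 5k)` modulo `m`. Distinct vertices of equal colour are exactly `m` apart,
  -- whereas equal or adjacent blobs are less than `2k ≤ m` apart and blobs `0`, `4` more than
  -- `3k ≥ m` apart.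
  refine ⟨Coloring.mk (fun x => ⟨if pos x < m then pos x else pos x - m, by
    have := hpos x; split_ifs <;> omega⟩) ?_⟩
  rintro ⟨⟨i, hi⟩, a, ha⟩ ⟨⟨j, hj⟩, b, hb⟩ hadj hcol
  have hpx := hpos (⟨i, hi⟩, ⟨a, ha⟩)
  have hpy := hpos (⟨j, hj⟩, ⟨b, hb⟩)
  simp only [cliqueBlowupPow_adj, cycleGraph_five_adj_iff, ne_eq, Prod.mk.injEq, Fin.mk.injEq]
    at hadj
  simp only [Fin.mk.injEq, pos] at hcol hpx hpy
  interval_cases i <;> interval_cases j <;> split_ifs at hcol <;> omega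

theorem cycleGraph_five_cliqueNum : (cycleGraph 5).cliqueNum = 2 := by
  have hle : ∀ s : Finset (Fin 5), (cycleGraph 5).IsClique (s : Set (Fin 5)) → #s ≤ 2 := by decide
  obtain ⟨s, hs⟩ := (cycleGraph 5).exists_isNClique_cliqueNum
  have hedge : (cycleGraph 5).IsClique (({0, 1} : Finset (Fin 5)) : Set (Fin 5)) := by
    simp [cycleGraph_five_adj_iff]
  exact le_antisymm (hs.card_eq ▸ hle s hs.isClique) hedge.card_le_cliqueNum

theorem cycleGraph_five_indepNum_le : (cycleGraph 5).indepNum ≤ 2 := by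
  have hle : ∀ s : Finset (Fin 5), (cycleGraph 5).IsIndepSet (s : Set (Fin 5)) → #s ≤ 2 := by
    decide
  obtain ⟨s, hs⟩ := (cycleGraph 5).exists_isNIndepSet_indepNum
  exact hs.card_eq ▸ hle s hs.isIndepSet

theorem chromaticNumber_cliqueBlowupPow_cycleGraph_five (k : ℕ) :
    (cliqueBlowupPow (cycleGraph 5) k).chromaticNumber = ((5 * k + 1) / 2 : ℕ) := by
  refine le_antisymm (chromaticNumber_le_iff_colorable.mpr
    (cliqueBlowupPow_cycleGraph_five_colorable k)) (le_chromaticNumber_iff_colorable.mpr ?_)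
  intro n hn
  have hcard := hn.card_le_indepNum_mul
  have hindep := (indepNum_cliqueBlowupPow_le (cycleGraph 5) k).trans cycleGraph_five_indepNum_le
  simp only [Fintype.card_prod, Fintype.card_fin] at hcard
  have := Nat.mul_le_mul_right n hindep
  omega

theorem Nat.ceil_natCast_div_two {K : Type*} [Field K] [LinearOrder K] [IsStrictOrderedRing K]
    [FloorSemiring K] (n : ℕ) : ⌈(n : K) / 2⌉₊ = (n + 1) / 2 := by
  refine le_antisymm (Nat.ceil_le.mpr ?_) ?_
  · rw [div_le_iff₀ two_pos]
    exact_mod_cast (by omega : n ≤ (n + 1) / 2 * 2)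
  · have h := Nat.le_ceil ((n : K) / 2)
    rw [div_le_iff₀ two_pos] at h
    have : n ≤ ⌈(n : K) / 2⌉₊ * 2 := by exact_mod_cast h
    omega

theorem blowup_C5_extremal_general (k : ℕ) :
    CapFree (cliqueBlowupPow (cycleGraph 5) k) ∧
    EvenHoleFree (cliqueBlowupPow (cycleGraph 5) k) ∧
    (cliqueBlowupPow (cycleGraph 5) k).cliqueNum = 2 * k ∧
    (cliqueBlowupPow (cycleGraph 5) k).chromaticNumber =
      ((⌈(5 * k : ℚ) / 2⌉₊ : ℕ) : ℕ∞) ∧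
    (cliqueBlowupPow (cycleGraph 5) k).chromaticNumber =
      ((⌈(5 : ℚ) / 4 * ((cliqueBlowupPow (cycleGraph 5) k).cliqueNum : ℚ)⌉₊ : ℕ) : ℕ∞) := by
  have hω : (cliqueBlowupPow (cycleGraph 5) k).cliqueNum = 2 * k := by
    rw [cliqueNum_cliqueBlowupPow, cycleGraph_five_cliqueNum, mul_comm]
  have hχ : (cliqueBlowupPow (cycleGraph 5) k).chromaticNumber = ⌈(5 * k : ℚ) / 2⌉₊ := by
    rw [chromaticNumber_cliqueBlowupPow_cycleGraph_five, ← Nat.ceil_natCast_div_two (K := ℚ),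
      Nat.cast_mul, Nat.cast_ofNat]
  refine ⟨cycleGraph_five_capFree.cliqueBlowupPow k,
    cycleGraph_five_evenHoleFree.cliqueBlowupPow k, hω, hχ, ?_⟩
  rw [hχ, hω]
  congr 3
  push_cast
  ring

/-- For every positive integer `k`, the `k`-clique blowup `C₅ᵏ` of the 5-cycle is a
(cap, even hole)-free graph with `ω = 2k` and `χ = ⌈5k/2⌉ = ⌈(5/4)·ω⌉`; hence the bound
`χ(G) ≤ ⌈(5/4)·ω(G)⌉` for (cap, even hole)-free graphs is attained for every even value
of the clique number. -/
theorem blowup_C5_extremal (k : ℕ) (hk : 1 ≤ k) :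
    CapFree (cliqueBlowupPow (cycleGraph 5) k) ∧
    EvenHoleFree (cliqueBlowupPow (cycleGraph 5) k) ∧
    (cliqueBlowupPow (cycleGraph 5) k).cliqueNum = 2 * k ∧
    (cliqueBlowupPow (cycleGraph 5) k).chromaticNumber =
      ((⌈(5 * k : ℚ) / 2⌉₊ : ℕ) : ℕ∞) ∧
    (cliqueBlowupPow (cycleGraph 5) k).chromaticNumber =
      ((⌈(5 : ℚ) / 4 * ((cliqueBlowupPow (cycleGraph 5) k).cliqueNum : ℚ)⌉₊ : ℕ) : ℕ∞) :=
  blowup_C5_extremal_general k
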